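/- Given n ≥ 2k and two rank-k orthogonal projectors P, Q on R^n with principal angles θ_1,…,θ_k, there exists an orthogonal matrix R such that RᵀPR projects onto span(e_1,…,e_k) and RᵀQR projects onto the span of the vectors cos(θ_i)e_i + sin(θ_i)e_{k+i}, i = 1,…,k. -/

import Mathlib

open Matrix Real

/-!
Replace `U`, `V` by `U W₁`, `V W₂`: their columns `uᵢ`, `vᵢ` are orthonormal with
`⟪uᵢ, vⱼ⟫ = δᵢⱼ cos θᵢ`. Then `vᵢ = cos θᵢ uᵢ + sin θᵢ xᵢ`, where the `xᵢ` with `sin θᵢ ≠ 0` are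
orthonormal and orthogonal to every `uⱼ`. Extending `u₁, …, u_k` (in slots `1, …, k`) and these
`xᵢ` (in slots `k + i`, which exist since `2k ≤ n`) to an orthonormal basis gives an orthogonal `R`
sending `eᵢ ↦ uᵢ` and `cos θᵢ eᵢ + sin θᵢ e_{k+i} ↦ vᵢ`; conjugating `P = ∑ uᵢuᵢᵀ` and
`Q = ∑ vᵢvᵢᵀ` by `R` gives the two model projectors.
-/

namespace Matrix

section

variable {m k : Type*}

theorem transpose_mul_self_mul_orthogonal [Fintype m] [Fintype k] [DecidableEq k]
    {U : Matrix m k ℝ} (hU : Uᵀ * U = 1) {W : Matrix k k ℝ} (hW : W ∈ orthogonalGroup k ℝ) :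
    (U * W)ᵀ * (U * W) = 1 := by
  rw [transpose_mul, Matrix.mul_assoc, ← Matrix.mul_assoc Uᵀ, hU, Matrix.one_mul,
    (mem_orthogonalGroup_iff' k ℝ).mp hW]

theorem mul_orthogonal_mul_transpose [Fintype k] [DecidableEq k] (U : Matrix m k ℝ)
    {W : Matrix k k ℝ} (hW : W ∈ orthogonalGroup k ℝ) : U * W * (U * W)ᵀ = U * Uᵀ := by
  rw [transpose_mul, Matrix.mul_assoc, ← Matrix.mul_assoc W, (mem_orthogonalGroup_iff k ℝ).mp hW,
    Matrix.one_mul]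

theorem transpose_mul_mul_eq_of_eq_mul_mul_transpose [Fintype m] [Fintype k] [DecidableEq k]
    {U V : Matrix m k ℝ} {W₁ W₂ D : Matrix k k ℝ} (hW₁ : W₁ ∈ orthogonalGroup k ℝ)
    (hW₂ : W₂ ∈ orthogonalGroup k ℝ) (hUV : Uᵀ * V = W₁ * D * W₂ᵀ) :
    (U * W₁)ᵀ * (V * W₂) = D := by
  rw [transpose_mul, Matrix.mul_assoc, ← Matrix.mul_assoc Uᵀ, hUV]
  simp only [Matrix.mul_assoc]
  rw [(mem_orthogonalGroup_iff' k ℝ).mp hW₂, Matrix.mul_one, ← Matrix.mul_assoc,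
    (mem_orthogonalGroup_iff' k ℝ).mp hW₁, Matrix.one_mul]

theorem transpose_mul_mul_transpose_mul_of_mul_eq [Fintype m] [DecidableEq m]
    [Fintype k] {R : Matrix m m ℝ} (hR : R ∈ orthogonalGroup m ℝ) {A B : Matrix m k ℝ}
    (hRA : R * A = B) : Rᵀ * (B * Bᵀ) * R = A * Aᵀ := by
  have hRR := (mem_orthogonalGroup_iff' m ℝ).mp hR
  rw [← hRA, transpose_mul]
  simp only [Matrix.mul_assoc]
  rw [hRR, Matrix.mul_one, ← Matrix.mul_assoc, hRR, Matrix.one_mul]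

theorem exists_eq_mul_diagonal_add_mul_diagonal [Fintype m] [Fintype k] [DecidableEq k]
    {U V : Matrix m k ℝ} {c s : k → ℝ}
    (hU : Uᵀ * U = 1) (hV : Vᵀ * V = 1) (hUV : Uᵀ * V = diagonal c)
    (hcs : ∀ i, c i ^ 2 + s i ^ 2 = 1) :
    ∃ X : Matrix m k ℝ, Uᵀ * X = 0 ∧ Xᵀ * X = diagonal (fun i => if s i = 0 then 0 else 1) ∧
      V = U * diagonal c + X * diagonal s := by
  set M := V - U * diagonal c
  have hUM : Uᵀ * M = 0 := by
    rw [Matrix.mul_sub, hUV, ← Matrix.mul_assoc, hU, Matrix.one_mul, sub_self]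
  have hVU : Vᵀ * U = diagonal c := by
    rw [← transpose_transpose (Vᵀ * U), transpose_mul, transpose_transpose, hUV, diagonal_transpose]
  have hMM : Mᵀ * M = diagonal (fun i => s i ^ 2) := by
    have : Mᵀ * M = 1 - diagonal c * diagonal c := by
      simp only [M, transpose_sub, transpose_mul, Matrix.sub_mul, Matrix.mul_sub, Matrix.mul_assoc,
        ← Matrix.mul_assoc Uᵀ, ← Matrix.mul_assoc Vᵀ, hU, hV, hUV, hVU, diagonal_transpose,
        Matrix.one_mul]
      abel
    rw [this, diagonal_mul_diagonal, ← diagonal_one, diagonal_sub]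
    congr 1
    funext i
    linarith [hcs i]
  have hM_col_zero : ∀ i j, s j = 0 → M i j = 0 := by
    intro i j hj
    have := congrFun₂ hMM j j
    rw [mul_apply', diagonal_apply_eq, hj, zero_pow two_ne_zero] at this
    exact congrFun (dotProduct_self_eq_zero.mp this) i
  -- `(s i)⁻¹ = 0` when `s i = 0`, and then the `i`-th column of `M` vanishes anyway.
  refine ⟨M * diagonal (fun i => (s i)⁻¹), ?_, ?_, ?_⟩
  · rw [← Matrix.mul_assoc, hUM, Matrix.zero_mul]
  · rw [transpose_mul, diagonal_transpose, Matrix.mul_assoc, ← Matrix.mul_assoc Mᵀ, hMM,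
      diagonal_mul_diagonal, diagonal_mul_diagonal]
    congr 1
    funext i
    split_ifs with h
    · simp [h]
    · field_simp
  · ext i j
    have : M i j = M i j * (s j)⁻¹ * s j := by
      by_cases h : s j = 0
      · simp [hM_col_zero i j h]
      · field_simp
    simp only [M, add_apply, mul_diagonal, sub_apply] at this ⊢
    linarith

theorem transpose_fromCols_mul_fromCols_apply [Fintype m] [Fintype k] [DecidableEq k]
    {U X : Matrix m k ℝ} {s : k → ℝ} (hU : Uᵀ * U = 1) (hUX : Uᵀ * X = 0)
    (hX : Xᵀ * X = diagonal (fun i => if s i = 0 then 0 else 1)) {a b : k ⊕ k}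
    (ha : a ∈ Set.range Sum.inl ∪ Sum.inr '' {j | s j ≠ 0})
    (hb : b ∈ Set.range Sum.inl ∪ Sum.inr '' {j | s j ≠ 0}) :
    ((fromCols U X)ᵀ * fromCols U X) a b = if a = b then 1 else 0 := by
  have hXU : Xᵀ * U = 0 := by
    rw [← transpose_transpose (Xᵀ * U), transpose_mul, transpose_transpose, hUX, transpose_zero]
  rw [transpose_fromCols, fromRows_mul_fromCols, hU, hUX, hXU, hX]
  rcases ha with ⟨a, rfl⟩ | ⟨a, ha, rfl⟩ <;> rcases hb with ⟨b, rfl⟩ | ⟨b, hb, rfl⟩ <;>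
    simp_all [one_apply, diagonal_apply]

theorem exists_mem_orthogonalGroup_apply_eq {ι : Type*} [DecidableEq ι] [Fintype m]
    [DecidableEq m] (A : Matrix m ι ℝ) (e : ι ↪ m) (S : Set ι)
    (hA : ∀ a ∈ S, ∀ b ∈ S, (Aᵀ * A) a b = if a = b then 1 else 0) :
    ∃ R ∈ orthogonalGroup m ℝ, ∀ a ∈ S, ∀ i, R i (e a) = A i a := by
  let w : ι → EuclideanSpace ℝ m := fun a => WithLp.toLp 2 fun i => A i a
  let v : m → EuclideanSpace ℝ m := Function.extend e w 0
  have hv : ∀ a, v (e a) = w a := e.injective.extend_apply w 0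
  have hon : Orthonormal ℝ ((e '' S).domRestrict v) := by
    rw [orthonormal_iff_ite]
    rintro ⟨_, a, ha, rfl⟩ ⟨_, b, hb, rfl⟩
    simpa [hv, w, EuclideanSpace.inner_eq_star_dotProduct, dotProduct, mul_apply, mul_comm,
      Subtype.ext_iff, e.injective.eq_iff] using hA a ha b hb
  obtain ⟨b, hb⟩ := hon.exists_orthonormalBasis_extension_of_card_eq (by simp)
  refine ⟨(EuclideanSpace.basisFun m ℝ).toBasis.toMatrix b,
    (EuclideanSpace.basisFun m ℝ).toMatrix_orthonormalBasis_mem_orthogonal b, ?_⟩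
  intro a ha i
  simp [Module.Basis.toMatrix_apply, hb (e a) ⟨a, ha, rfl⟩, hv, w]

end

theorem mul_of_ite_val_eq_apply {m : Type*} {n k : ℕ} {p : Fin k → Fin n}
    (hp : ∀ j, (p j : ℕ) = j) (R : Matrix m (Fin n) ℝ) (i : m) (j : Fin k) :
    (R * of fun (l : Fin n) (j : Fin k) => if (l : ℕ) = (j : ℕ) then (1 : ℝ) else 0) i j =
      R i (p j) := by
  rw [mul_apply, Finset.sum_eq_single (p j)]
  · simp [hp]
  · intro l _ hl
    simp [← hp, Fin.val_inj, hl]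
  · simp

theorem mul_of_ite_val_eq_add_apply {m : Type*} {n k : ℕ} {p q : Fin k → Fin n}
    (hp : ∀ j, (p j : ℕ) = j) (hq : ∀ j, (q j : ℕ) = k + j) (R : Matrix m (Fin n) ℝ)
    (c s : Fin k → ℝ) (i : m) (j : Fin k) :
    (R * of fun (l : Fin n) (j : Fin k) =>
        if (l : ℕ) = (j : ℕ) then c j else if (l : ℕ) = k + (j : ℕ) then s j else 0) i j =
      R i (p j) * c j + R i (q j) * s j := by
  have hk : k + (j : ℕ) ≠ j := by have := j.isLt; omega
  rw [mul_apply, Finset.sum_eq_add (p j) (q j) (Fin.ne_of_val_ne (by rw [hp, hq]; exact hk.symm))]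
  · simp only [of_apply, hp, hq, if_pos, if_neg hk]
  · rintro l - ⟨hlp, hlq⟩
    have hlp' : (l : ℕ) ≠ j := fun h => hlp (Fin.ext (h.trans (hp j).symm))
    have hlq' : (l : ℕ) ≠ k + j := fun h => hlq (Fin.ext (h.trans (hq j).symm))
    simp [hlp', hlq']
  · simp
  · simp

end Matrix

theorem stmt_12_general (n k : ℕ) (hnk : 2 * k ≤ n)
    (P Q : Matrix (Fin n) (Fin n) ℝ)
    (U V : Matrix (Fin n) (Fin k) ℝ)
    (hU : Uᵀ * U = 1) (hV : Vᵀ * V = 1) (hP : P = U * Uᵀ) (hQ : Q = V * Vᵀ)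
    (θ : Fin k → ℝ)
    (W₁ W₂ : Matrix (Fin k) (Fin k) ℝ)
    (hW₁ : W₁ ∈ Matrix.orthogonalGroup (Fin k) ℝ)
    (hW₂ : W₂ ∈ Matrix.orthogonalGroup (Fin k) ℝ)
    (hsvd : Uᵀ * V = W₁ * Matrix.diagonal (fun i => Real.cos (θ i)) * W₂ᵀ) :
    ∃ R : Matrix (Fin n) (Fin n) ℝ, R ∈ Matrix.orthogonalGroup (Fin n) ℝ ∧
      -- RᵀPR = E Eᵀ, the projector onto span(e₁,…,e_k), where E i j = δ_{i,j} for j < k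
      (letI E : Matrix (Fin n) (Fin k) ℝ :=
        Matrix.of fun i j => if (i : ℕ) = (j : ℕ) then (1 : ℝ) else 0
       letI W : Matrix (Fin n) (Fin k) ℝ :=
        Matrix.of fun i j =>
          if (i : ℕ) = (j : ℕ) then Real.cos (θ j)
          else if (i : ℕ) = k + (j : ℕ) then Real.sin (θ j) else 0
       Rᵀ * P * R = E * Eᵀ ∧ Rᵀ * Q * R = W * Wᵀ) := by
  have hU' := transpose_mul_self_mul_orthogonal hU hW₁
  obtain ⟨X, hUX, hXX, hVX⟩ := exists_eq_mul_diagonal_add_mul_diagonal hU'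
    (transpose_mul_self_mul_orthogonal hV hW₂)
    (transpose_mul_mul_eq_of_eq_mul_mul_transpose hW₁ hW₂ hsvd) fun i => cos_sq_add_sin_sq (θ i)
  let e : Fin k ⊕ Fin k ↪ Fin n := finSumFinEquiv.toEmbedding.trans (Fin.castLEEmb (by omega))
  obtain ⟨R, hR, hRcol⟩ := exists_mem_orthogonalGroup_apply_eq (fromCols (U * W₁) X) e _
    fun a ha b hb => transpose_fromCols_mul_fromCols_apply hU' hUX hXX ha hb
  have he₁ : ∀ j, (e (.inl j) : ℕ) = j := by simp [e]
  have he₂ : ∀ j, (e (.inr j) : ℕ) = k + j := by simp [e, add_comm]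
  refine ⟨R, hR, ?_, ?_⟩
  · rw [hP, ← mul_orthogonal_mul_transpose U hW₁]
    refine transpose_mul_mul_transpose_mul_of_mul_eq hR ?_
    ext i j
    rw [mul_of_ite_val_eq_apply he₁, hRcol _ (.inl ⟨j, rfl⟩), fromCols_apply_inl]
  · rw [hQ, ← mul_orthogonal_mul_transpose V hW₂, hVX]
    refine transpose_mul_mul_transpose_mul_of_mul_eq hR ?_
    ext i j
    rw [mul_of_ite_val_eq_add_apply he₁ he₂, hRcol _ (.inl ⟨j, rfl⟩), fromCols_apply_inl]
    by_cases hj : sin (θ j) = 0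
    · simp [hj, mul_diagonal]
    · rw [hRcol _ (.inr ⟨j, hj, rfl⟩), fromCols_apply_inr]
      simp [mul_diagonal]

/-- CS-decomposition form: for n ≥ 2k and rank-k orthogonal projectors P, Q with
    principal angles θ₁,…,θ_k, there is an orthogonal R with RᵀPR the projector
    onto span(e₁,…,e_k) and RᵀQR the projector onto
    span(cos θᵢ eᵢ + sin θᵢ e_{k+i}, i = 1,…,k). -/
theorem stmt_12 (n k : ℕ) (hnk : 2 * k ≤ n)
    (P Q : Matrix (Fin n) (Fin n) ℝ)
    (hPsym : P.IsSymm) (hQsym : Q.IsSymm) (hPidem : P * P = P) (hQidem : Q * Q = Q)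
    (U V : Matrix (Fin n) (Fin k) ℝ)
    (hU : Uᵀ * U = 1) (hV : Vᵀ * V = 1) (hP : P = U * Uᵀ) (hQ : Q = V * Vᵀ)
    (θ : Fin k → ℝ) (hθ : ∀ i, θ i ∈ Set.Icc 0 (Real.pi / 2))
    (W₁ W₂ : Matrix (Fin k) (Fin k) ℝ)
    (hW₁ : W₁ ∈ Matrix.orthogonalGroup (Fin k) ℝ)
    (hW₂ : W₂ ∈ Matrix.orthogonalGroup (Fin k) ℝ)
    (hsvd : Uᵀ * V = W₁ * Matrix.diagonal (fun i => Real.cos (θ i)) * W₂ᵀ) :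
    ∃ R : Matrix (Fin n) (Fin n) ℝ, R ∈ Matrix.orthogonalGroup (Fin n) ℝ ∧
      -- RᵀPR = E Eᵀ, the projector onto span(e₁,…,e_k), where E i j = δ_{i,j} for j < k
      (letI E : Matrix (Fin n) (Fin k) ℝ :=
        Matrix.of fun i j => if (i : ℕ) = (j : ℕ) then (1 : ℝ) else 0
       letI W : Matrix (Fin n) (Fin k) ℝ :=
        Matrix.of fun i j =>
          if (i : ℕ) = (j : ℕ) then Real.cos (θ j)
          else if (i : ℕ) = k + (j : ℕ) then Real.sin (θ j) else 0
       Rᵀ * P * R = E * Eᵀ ∧ Rᵀ * Q * R = W * Wᵀ) :=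
  stmt_12_general n k hnk P Q U V hU hV hP hQ θ W₁ W₂ hW₁ hW₂ hsvd
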